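/- Let P₀ and P₁ be computational problems (Ξᵢ, Ωᵢ, Mᵢ, Λᵢ) satisfying the SCI consistency condition, with Ωᵢ ≠ ∅ and Λᵢ ≠ ∅ for i = 0, 1. Then there exists a computational problem U satisfying the consistency condition such that both P₀ and P₁ finite-query transport-reduce to U with continuous decoders. Explicitly, U has input class the tagged disjoint union ({0} × Ω₀) ∪ ({1} × Ω₁), output space the tagged disjoint union of M₀ and M₁ with inter-component distance 2 and intra-component distance min{1, dᵢ}, target map (i, A) ↦ (i, Ξᵢ(A)), and queries the zero-extended queries of each component together with the tag query τ(i, A) = i. -/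

import Mathlib

/-- An SCI computational problem. -/
structure CompProb where
  Ω : Type
  M : Type
  met : MetricSpace M
  Ξ : Ω → M
  Λ : Set (Ω → ℂ)

/-- The continuous decoder condition between the metric output spaces. -/
def ContDecoder (M N : Type) (mM : MetricSpace M) (mN : MetricSpace N)
    (D : M → N) : Prop := by
  letI := mM; letI := mN; exact Continuous D

/-- The SCI consistency condition on a computational problem. -/
def Consistent (P : CompProb) : Prop :=
  ∀ A B : P.Ω, P.Ξ A ≠ P.Ξ B → ∃ f ∈ P.Λ, f A ≠ f B

/-- Finite-query transport with continuous decoders. -/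
def Reduces (Q P : CompProb) : Prop :=
  ∃ (E : Q.Ω → P.Ω) (D : P.M → Q.M),
    ContDecoder P.M Q.M P.met Q.met D ∧
    (∀ A : Q.Ω, Q.Ξ A = D (P.Ξ (E A))) ∧
    (∀ f ∈ P.Λ, ∃ (m : ℕ) (_ : 0 < m) (γ : Fin m → (Q.Ω → ℂ))
      (ϑ : (Fin m → ℂ) → ℂ),
      (∀ j, γ j ∈ Q.Λ) ∧ ∀ A : Q.Ω, f (E A) = ϑ (fun j => γ j A))

theorem reduces_of_pullback {Q P : CompProb} (E : Q.Ω → P.Ω) (D : P.M → Q.M)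
    (hD : ContDecoder P.M Q.M P.met Q.met D) (hΞ : ∀ A, Q.Ξ A = D (P.Ξ (E A)))
    (hΛ : Q.Λ.Nonempty) (hpull : ∀ f ∈ P.Λ, f ∘ E ∈ Q.Λ ∨ ∃ c, f ∘ E = fun _ => c) :
    Reduces Q P := by
  refine ⟨E, D, hD, hΞ, fun f hf => ?_⟩
  rcases hpull f hf with hquery | ⟨c, hconst⟩
  · exact ⟨1, one_pos, fun _ => f ∘ E, fun v => v 0, fun _ => hquery, fun _ => rfl⟩
  · obtain ⟨g, hg⟩ := hΛ
    exact ⟨1, one_pos, fun _ => g, fun _ => c, fun _ => hg, fun A => congrFun hconst A⟩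

def sumQueries {α β : Type} (Λ₀ : Set (α → ℂ)) (Λ₁ : Set (β → ℂ)) : Set (α ⊕ β → ℂ) :=
  (fun g => Sum.elim g fun _ => 0) '' Λ₀ ∪ (fun g => Sum.elim (fun _ => 0) g) '' Λ₁ ∪
    {Sum.elim (fun _ => 0) fun _ => 1} -- the tag query `τ (i, A) = i`

/-- Any metric inducing the disjoint-union topology serves in place of the paper's
(`min 1 dᵢ` within a component, `2` across); Mathlib's `Sum` metric is used. -/
noncomputable def CompProb.sum (P Q : CompProb) : CompProb where
  Ω := P.Ω ⊕ Q.Ω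
  M := P.M ⊕ Q.M
  met := @Metric.metricSpaceSum P.M Q.M P.met Q.met
  Ξ := Sum.map P.Ξ Q.Ξ
  Λ := sumQueries P.Λ Q.Λ

theorem Consistent.sum {P Q : CompProb} (hP : Consistent P) (hQ : Consistent Q) :
    Consistent (P.sum Q) := by
  have htag : Sum.elim (fun _ : P.Ω => (0 : ℂ)) (fun _ => 1) ∈ (P.sum Q).Λ := Or.inr rfl
  rintro (a | a) (b | b) hne
  · obtain ⟨g, hg, hgab⟩ := hP a b fun h => hne (congrArg Sum.inl h)
    exact ⟨Sum.elim g fun _ => 0, Or.inl (Or.inl ⟨g, hg, rfl⟩), by simpa using hgab⟩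
  · exact ⟨_, htag, by simp⟩
  · exact ⟨_, htag, by simp⟩
  · obtain ⟨g, hg, hgab⟩ := hQ a b fun h => hne (congrArg Sum.inr h)
    exact ⟨Sum.elim (fun _ => 0) g, Or.inl (Or.inr ⟨g, hg, rfl⟩), by simpa using hgab⟩

theorem reduces_sum_left {P Q : CompProb} (hΩ : Nonempty P.Ω) (hΛ : P.Λ.Nonempty) :
    Reduces P (P.sum Q) := by
  let := P.met; let := Q.met
  refine reduces_of_pullback Sum.inl (Sum.elim id fun _ => P.Ξ hΩ.some)
    (by exact continuous_id.sumElim continuous_const) (fun _ => rfl) hΛ ?_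
  rintro f ((⟨g, hg, rfl⟩ | ⟨g, -, rfl⟩) | rfl)
  exacts [Or.inl hg, Or.inr ⟨0, rfl⟩, Or.inr ⟨0, rfl⟩]

theorem reduces_sum_right {P Q : CompProb} (hΩ : Nonempty Q.Ω) (hΛ : Q.Λ.Nonempty) :
    Reduces Q (P.sum Q) := by
  let := P.met; let := Q.met
  refine reduces_of_pullback Sum.inr (Sum.elim (fun _ => Q.Ξ hΩ.some) id)
    (by exact continuous_const.sumElim continuous_id) (fun _ => rfl) hΛ ?_
  rintro f ((⟨g, -, rfl⟩ | ⟨g, hg, rfl⟩) | rfl)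
  exacts [Or.inr ⟨0, rfl⟩, Or.inl hg, Or.inr ⟨1, rfl⟩]

/-- Upward directedness on the nondegenerate subclass: any two consistent
computational problems with nonempty input class and nonempty evaluation family
admit a common consistent upper bound with respect to finite-query transport
with continuous decoders. -/
theorem upward_directed_nondegenerate
    (P₀ P₁ : CompProb)
    (hc0 : Consistent P₀) (hc1 : Consistent P₁)
    (hΩ0 : Nonempty P₀.Ω) (hΩ1 : Nonempty P₁.Ω)
    (hΛ0 : P₀.Λ.Nonempty) (hΛ1 : P₁.Λ.Nonempty) :
    ∃ U : CompProb, Consistent U ∧ Reduces P₀ U ∧ Reduces P₁ U :=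
  ⟨P₀.sum P₁, hc0.sum hc1, reduces_sum_left hΩ0 hΛ0, reduces_sum_right hΩ1 hΛ1⟩
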